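/- Let V be a subspace of 𝔽_q[x₁,…,x_m] with property (*). Then for every pair of subsets L, L' ⊆ V, letting N_q(f) = |{α ∈ 𝔽_q^m : f(α)=0}|, we have |Σ_{f∈L, f'∈L'} N_q(f − f') − q^(m−1)·|L|·|L'|| ≤ q^(dim V − 1)·√(|L|·|L'|). -/

import Mathlib

/-!
Write `n_α(c)` for the number of `f ∈ L` with `f(α) = c` and `d_α(c) = n_α(c) - |L|/q`. Counting
pairs gives `Σ_{f,f'} N_q(f - f') = Σ_α Σ_c n_α(c) n'_α(c)`, so the error term is
`Σ_α Σ_c d_α(c) d'_α(c)`. Property (*) makes the pure powers `x_j^{k_j}` separate points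
(`x ↦ x^k` is a bijection of `𝔽_q` when `gcd(k, q - 1) = 1`), and together with `1 ∈ V` this makes
evaluation at two distinct points a surjection `V → 𝔽_q²`. Hence the functions
`v ↦ d_α(v(α))` on `V` are pairwise orthogonal, and Bessel's inequality against the indicator of `L`
yields `Σ_α Σ_c d_α(c)² ≤ q^(dim V - 1) |L|`. Cauchy–Schwarz concludes.
-/

open Finset
open scoped RealInnerProductSpace

theorem sum_inner_le_mul_norm_sq_of_orthogonal {E ι : Type*} [NormedAddCommGroup E]
    [InnerProductSpace ℝ E] (s : Finset ι) (x : E) (g : ι → E) {P : ℝ} (hP : 0 < P)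
    (horth : ∀ i ∈ s, ∀ j ∈ s, i ≠ j → ⟪g i, g j⟫ = 0)
    (hself : ∀ i ∈ s, ⟪g i, g i⟫ = P * ⟪x, g i⟫) :
    ∑ i ∈ s, ⟪x, g i⟫ ≤ P * ‖x‖ ^ 2 := by
  have hsum : ‖∑ i ∈ s, g i‖ ^ 2 = P * ∑ i ∈ s, ⟪x, g i⟫ := by
    rw [← real_inner_self_eq_norm_sq, sum_inner, mul_sum]
    refine sum_congr rfl fun i hi => ?_
    rw [inner_sum, sum_eq_single i (fun j hj hji => horth i hi j hj hji.symm) (absurd hi),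
      hself i hi]
  have hexpand := norm_sub_sq_real (P • x) (∑ i ∈ s, g i)
  rw [hsum, norm_smul, real_inner_smul_left, inner_sum, Real.norm_of_nonneg hP.le] at hexpand
  nlinarith [sq_nonneg ‖P • x - ∑ i ∈ s, g i‖]

section UniformFibers

variable {Ω C : Type*} [DecidableEq C]

def HasUniformFibers [Fintype Ω] [Fintype C] (φ : Ω → C) : Prop :=
  ∀ c, #{ω | φ ω = c} * Fintype.card C = Fintype.card Ω

theorem sum_comp_eq_sum_card_filter_smul [Fintype C] {M : Type*} [AddCommMonoid M]
    (s : Finset Ω) (φ : Ω → C) (h : C → M) :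
    ∑ ω ∈ s, h (φ ω) = ∑ c, #{ω ∈ s | φ ω = c} • h c := by
  simp only [← sum_fiberwise' s φ h, sum_const]

theorem HasUniformFibers.sum_comp [Fintype Ω] [Fintype C] {φ : Ω → C}
    (hφ : HasUniformFibers φ) (h : C → ℝ) :
    ∑ ω, h (φ ω) = Fintype.card Ω / Fintype.card C * ∑ c, h c := by
  rw [sum_comp_eq_sum_card_filter_smul, mul_sum]
  refine sum_congr rfl fun c _ => ?_
  have hC : (Fintype.card C : ℝ) ≠ 0 := by exact_mod_cast (Fintype.card_pos_iff.mpr ⟨c⟩).ne'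
  rw [nsmul_eq_mul, ← hφ c, Nat.cast_mul, mul_div_cancel_right₀ _ hC]

theorem AddMonoidHom.hasUniformFibers_of_surjective {G W : Type*} [AddGroup G] [Fintype G]
    [AddGroup W] [Fintype W] [DecidableEq W] (T : G →+ W) (hT : Function.Surjective T) :
    HasUniformFibers T := by
  intro c
  have hfib : ∀ w, #{g | T g = w} = #{g | T g = c} := fun w =>
    AddMonoidHom.card_fiber_eq_of_mem_range T (hT w) (hT c)
  calc #{g | T g = c} * Fintype.card W = ∑ w, #{g | T g = w} := by
        rw [sum_congr rfl fun w _ => hfib w, sum_const, card_univ, smul_eq_mul, mul_comm]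
    _ = Fintype.card G := (card_eq_sum_card_fiberwise fun g _ => mem_univ (T g)).symm

end UniformFibers

section FiberDeviation

variable {Ω X C : Type*} [Fintype C] [DecidableEq C] (e : X → Ω → C)

noncomputable def fiberDeviation (L : Finset Ω) (α : X) (c : C) : ℝ :=
  #{ω ∈ L | e α ω = c} - #L / Fintype.card C

theorem sum_card_filter_eq_card (L : Finset Ω) (α : X) :
    ∑ c, (#{ω ∈ L | e α ω = c} : ℝ) = #L := by
  exact_mod_cast (card_eq_sum_card_fiberwise fun ω _ => mem_univ (e α ω)).symm

theorem sum_fiberDeviation [Nonempty C] (L : Finset Ω) (α : X) :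
    ∑ c, fiberDeviation e L α c = 0 := by
  simp only [fiberDeviation, sum_sub_distrib, sum_card_filter_eq_card, sum_const, card_univ,
    nsmul_eq_mul]
  field_simp
  ring

theorem sum_card_filter_mul_fiberDeviation [Nonempty C] (L L' : Finset Ω) (α : X) :
    ∑ c, #{ω ∈ L | e α ω = c} * fiberDeviation e L' α c =
      ∑ c, fiberDeviation e L α c * fiberDeviation e L' α c := by
  have hsplit : ∀ c, (#{ω ∈ L | e α ω = c} : ℝ) =
      fiberDeviation e L α c + #L / Fintype.card C := fun c => by
    rw [fiberDeviation, sub_add_cancel]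
  simp only [hsplit, add_mul, sum_add_distrib, ← mul_sum, sum_fiberDeviation, mul_zero, add_zero]

theorem sum_fiberDeviation_sq [Nonempty C] (L : Finset Ω) (α : X) :
    ∑ c, fiberDeviation e L α c ^ 2 = ∑ ω ∈ L, fiberDeviation e L α (e α ω) := by
  rw [sum_comp_eq_sum_card_filter_smul]
  simp only [nsmul_eq_mul, sum_card_filter_mul_fiberDeviation, sq]

theorem sum_fiberDeviation_mul [Nonempty C] (L L' : Finset Ω) (α : X) :
    ∑ c, fiberDeviation e L α c * fiberDeviation e L' α c =
      ∑ c, (#{ω ∈ L | e α ω = c} * #{ω ∈ L' | e α ω = c} : ℝ) -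
        #L * #L' / Fintype.card C := by
  rw [← sum_card_filter_mul_fiberDeviation]
  simp only [fiberDeviation, mul_sub, sum_sub_distrib, ← sum_mul, sum_card_filter_eq_card]
  ring

theorem sum_sum_card_eq_eq_sum_sum_mul [Fintype X] (L L' : Finset Ω) :
    ∑ ω ∈ L, ∑ ω' ∈ L', #{α | e α ω = e α ω'} =
      ∑ α, ∑ c, #{ω ∈ L | e α ω = c} * #{ω ∈ L' | e α ω = c} := by
  have hswap : ∀ ω, ∑ ω' ∈ L', #{α | e α ω = e α ω'} =
      ∑ α, #{ω' ∈ L' | e α ω' = e α ω} := fun ω => by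
    simp only [card_filter, @eq_comm _ (e _ ω)]
    exact sum_comm
  rw [sum_congr rfl fun ω _ => hswap ω, sum_comm]
  refine sum_congr rfl fun α _ => ?_
  rw [sum_comp_eq_sum_card_filter_smul L (e α) fun c => #{ω' ∈ L' | e α ω' = c}]
  simp only [smul_eq_mul]

end FiberDeviation

section PairwiseUniform

theorem inner_toLp_toLp_eq_sum_mul {Ω : Type*} [Fintype Ω] (u v : Ω → ℝ) :
    ⟪(WithLp.toLp 2 u : EuclideanSpace ℝ Ω), WithLp.toLp 2 v⟫ = ∑ ω, u ω * v ω := by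
  simp [EuclideanSpace.inner_toLp_toLp, dotProduct, mul_comm]

variable {Ω X C : Type*} [Fintype Ω] [Fintype X] [Fintype C] [DecidableEq C] [Nonempty Ω]
  [Nonempty C] {e : X → Ω → C}

theorem sum_sum_fiberDeviation_sq_le (h1 : ∀ α, HasUniformFibers (e α))
    (h2 : ∀ α β, α ≠ β → HasUniformFibers fun ω => (e α ω, e β ω)) (L : Finset Ω) :
    ∑ α, ∑ c, fiberDeviation e L α c ^ 2 ≤ Fintype.card Ω / Fintype.card C * #L := by
  classical
  set P : ℝ := Fintype.card Ω / Fintype.card C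
  have hP : 0 < P := by positivity
  let x : EuclideanSpace ℝ Ω := WithLp.toLp 2 fun ω => if ω ∈ L then 1 else 0
  let g : X → EuclideanSpace ℝ Ω := fun α => WithLp.toLp 2 fun ω => fiberDeviation e L α (e α ω)
  have hx : ‖x‖ ^ 2 = #L := by
    rw [← real_inner_self_eq_norm_sq, inner_toLp_toLp_eq_sum_mul]
    simp
  have hxg : ∀ α, ⟪x, g α⟫ = ∑ c, fiberDeviation e L α c ^ 2 := fun α => by
    simp [x, g, inner_toLp_toLp_eq_sum_mul, sum_fiberDeviation_sq]
  have hgg : ∀ α, ⟪g α, g α⟫ = P * ∑ c, fiberDeviation e L α c ^ 2 := fun α => by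
    simp only [g, inner_toLp_toLp_eq_sum_mul, ← sq]
    exact (h1 α).sum_comp fun c => fiberDeviation e L α c ^ 2
  have horth : ∀ α β, α ≠ β → ⟪g α, g β⟫ = 0 := fun α β hαβ => by
    have := (h2 α β hαβ).sum_comp fun c => fiberDeviation e L α c.1 * fiberDeviation e L β c.2
    -- uniformity of the pair factors the sum as `(Σ_c d_α(c)) (Σ_c d_β(c)) = 0`
    simp only [Fintype.sum_prod_type, ← mul_sum, ← sum_mul, sum_fiberDeviation] at this
    simpa only [g, inner_toLp_toLp_eq_sum_mul, mul_zero] using this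
  simpa [hxg, hgg, hx] using sum_inner_le_mul_norm_sq_of_orthogonal univ x g hP
    (fun α _ β _ hαβ => horth α β hαβ) (fun α _ => by rw [hgg, hxg])

theorem abs_sum_sum_card_eq_sub_le (h1 : ∀ α, HasUniformFibers (e α))
    (h2 : ∀ α β, α ≠ β → HasUniformFibers fun ω => (e α ω, e β ω)) (L L' : Finset Ω) :
    |∑ ω ∈ L, ∑ ω' ∈ L', (#{α | e α ω = e α ω'} : ℝ) -
        Fintype.card X / Fintype.card C * #L * #L'| ≤
      Fintype.card Ω / Fintype.card C * √(#L * #L') := by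
  set P : ℝ := Fintype.card Ω / Fintype.card C
  have hcross : ∑ ω ∈ L, ∑ ω' ∈ L', (#{α | e α ω = e α ω'} : ℝ) -
      Fintype.card X / Fintype.card C * #L * #L' =
        ∑ α, ∑ c, fiberDeviation e L α c * fiberDeviation e L' α c := by
    have hcount := congr_arg (Nat.cast (R := ℝ)) (sum_sum_card_eq_eq_sum_sum_mul e L L')
    push_cast at hcount
    simp only [hcount, sum_fiberDeviation_mul, sum_sub_distrib, sum_const, card_univ, nsmul_eq_mul]
    ring
  have hcs : (∑ α, ∑ c, fiberDeviation e L α c * fiberDeviation e L' α c) ^ 2 ≤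
      (∑ α, ∑ c, fiberDeviation e L α c ^ 2) * ∑ α, ∑ c, fiberDeviation e L' α c ^ 2 := by
    simp only [← Fintype.sum_prod_type']
    exact sum_mul_sq_le_sq_mul_sq _ _ _
  have hbound := mul_le_mul (sum_sum_fiberDeviation_sq_le h1 h2 L)
    (sum_sum_fiberDeviation_sq_le h1 h2 L') (by positivity) (by positivity)
  calc _ ≤ √((P * #L) * (P * #L')) := by rw [hcross]; exact Real.abs_le_sqrt (hcs.trans hbound)
    _ = P * √(#L * #L') := by
      rw [show P * #L * (P * #L') = P ^ 2 * (#L * #L') by ring,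
        Real.sqrt_mul (sq_nonneg P), Real.sqrt_sq (by positivity)]

end PairwiseUniform

theorem FiniteField.pow_injective_of_coprime {F : Type*} [Field F] [Fintype F] {k : ℕ}
    (hk : 0 < k) (hcop : k.Coprime (Fintype.card F - 1)) :
    Function.Injective fun a : F => a ^ k := by
  intro a b hab
  rcases eq_or_ne a 0 with rfl | ha
  · exact ((pow_eq_zero_iff hk.ne').mp (hab.symm.trans (zero_pow hk.ne'))).symm
  rcases eq_or_ne b 0 with rfl | hb
  · exact (pow_eq_zero_iff hk.ne').mp (hab.trans (zero_pow hk.ne'))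
  have hunits : (Nat.card Fˣ).Coprime k := by
    rw [Nat.card_units, Nat.card_eq_fintype_card]
    exact hcop.symm
  have := (powCoprime hunits).injective (a₁ := Units.mk0 a ha) (a₂ := Units.mk0 b hb)
    (Units.ext (by simpa [powCoprime] using hab))
  simpa using congr_arg Units.val this

namespace MvPolynomial

variable {σ F : Type*} [Field F]

theorem monomial_one_mem_span {I : Set (σ →₀ ℕ)} {d : σ →₀ ℕ} (hd : d ∈ I) :
    monomial d (1 : F) ∈ Submodule.span F ((fun d => monomial d (1 : F)) '' I) :=
  Submodule.subset_span ⟨d, hd, rfl⟩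

theorem exists_mem_span_eval_ne [Fintype F] {I : Set (σ →₀ ℕ)}
    (hpure : ∀ j : σ, ∃ k : ℕ, 0 < k ∧ Nat.gcd k (Fintype.card F - 1) = 1 ∧
      Finsupp.single j k ∈ I)
    {α β : σ → F} (hαβ : α ≠ β) :
    ∃ p ∈ Submodule.span F ((fun d => monomial d (1 : F)) '' I), eval α p ≠ eval β p := by
  obtain ⟨j, hj⟩ := Function.ne_iff.mp hαβ
  obtain ⟨k, hk, hcop, hkI⟩ := hpure j
  refine ⟨_, monomial_one_mem_span hkI, ?_⟩
  simpa [eval_monomial] using (FiniteField.pow_injective_of_coprime hk hcop).ne hj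

variable (W : Submodule F (MvPolynomial σ F))

theorem eval_pair_surjective (h1 : (1 : MvPolynomial σ F) ∈ W) {p : MvPolynomial σ F}
    (hp : p ∈ W) {α β : σ → F} (hpαβ : eval α p ≠ eval β p) :
    Function.Surjective fun v : W =>
      (eval α (v : MvPolynomial σ F), eval β (v : MvPolynomial σ F)) := by
  rintro ⟨u, w⟩
  have hne : eval α p - eval β p ≠ 0 := sub_ne_zero.mpr hpαβ
  set l := (u - w) / (eval α p - eval β p)
  refine ⟨⟨l • p + (w - l * eval β p) • 1, W.add_mem (W.smul_mem l hp) (W.smul_mem _ h1)⟩, ?_⟩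
  simp only [smul_eq_C_mul, map_add, map_mul, eval_C, mul_one, Prod.mk.injEq]
  have hl : l * (eval α p - eval β p) = u - w := div_mul_cancel₀ _ hne
  exact ⟨by linear_combination hl, by ring⟩

section UniformEval

variable [Fintype F] [DecidableEq F] [Fintype W]

theorem hasUniformFibers_eval (h1 : (1 : MvPolynomial σ F) ∈ W) (α : σ → F) :
    HasUniformFibers fun v : W => eval α (v : MvPolynomial σ F) :=
  AddMonoidHom.hasUniformFibers_of_surjective
    ((eval α).toAddMonoidHom.comp W.subtype.toAddMonoidHom)
    fun c => ⟨⟨c • 1, W.smul_mem c h1⟩, by simp [smul_eq_C_mul]⟩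

theorem hasUniformFibers_eval_pair (h1 : (1 : MvPolynomial σ F) ∈ W) {p : MvPolynomial σ F}
    (hp : p ∈ W) {α β : σ → F} (hpαβ : eval α p ≠ eval β p) :
    HasUniformFibers fun v : W => (eval α (v : MvPolynomial σ F), eval β (v : MvPolynomial σ F)) :=
  AddMonoidHom.hasUniformFibers_of_surjective
    (((eval α).toAddMonoidHom.comp W.subtype.toAddMonoidHom).prod
      ((eval β).toAddMonoidHom.comp W.subtype.toAddMonoidHom))
    (eval_pair_surjective W h1 hp hpαβ)

end UniformEval

theorem abs_sum_sum_card_zeros_sub_le {σ F : Type*} [Fintype σ] [DecidableEq σ] [Nonempty σ]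
    [Field F] [Fintype F] [DecidableEq F] (W : Submodule F (MvPolynomial σ F))
    [FiniteDimensional F W] (h1 : (1 : MvPolynomial σ F) ∈ W)
    (hsep : ∀ α β : σ → F, α ≠ β → ∃ p ∈ W, eval α p ≠ eval β p)
    (L L' : Finset (MvPolynomial σ F)) (hL : ∀ f ∈ L, f ∈ W) (hL' : ∀ f ∈ L', f ∈ W) :
    |∑ f ∈ L, ∑ f' ∈ L', (#{α | eval α (f - f') = 0} : ℝ) -
        (Fintype.card F : ℝ) ^ (Fintype.card σ - 1) * #L * #L'| ≤
      (Fintype.card F : ℝ) ^ (Module.finrank F W - 1) * √(#L * #L') := by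
  classical
  have : Nontrivial W := ⟨⟨1, h1⟩, 0, by simp [Subtype.ext_iff]⟩
  have : Finite W := Module.finite_of_finite F
  let _ : Fintype W := Fintype.ofFinite W
  have hq : (Fintype.card F : ℝ) ≠ 0 := by positivity
  have hpow : ∀ n, 0 < n → (Fintype.card F : ℝ) ^ n / Fintype.card F = Fintype.card F ^ (n - 1) :=
    fun n hn => by rw [pow_sub₀ _ hq hn, pow_one, div_eq_mul_inv]
  have hcard : ∀ K : Finset (MvPolynomial σ F), (∀ f ∈ K, f ∈ W) → #(K.subtype (· ∈ W)) = #K :=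
    fun K hK => by rw [card_subtype, filter_true_of_mem hK]
  have hsum : ∑ v ∈ L.subtype (· ∈ W), ∑ v' ∈ L'.subtype (· ∈ W),
      (#{α | eval α (v : MvPolynomial σ F) = eval α v'} : ℝ) =
        ∑ f ∈ L, ∑ f' ∈ L', (#{α | eval α (f - f') = 0} : ℝ) := by
    rw [← sum_subtype_of_mem _ hL]
    refine sum_congr rfl fun v _ => ?_
    rw [← sum_subtype_of_mem _ hL']
    simp only [map_sub, sub_eq_zero]
  have hbound := abs_sum_sum_card_eq_sub_le
    (e := fun (α : σ → F) (v : W) => eval α (v : MvPolynomial σ F))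
    (hasUniformFibers_eval W h1)
    (fun α β hαβ => by
      obtain ⟨p, hp, hpαβ⟩ := hsep α β hαβ
      exact hasUniformFibers_eval_pair W h1 hp hpαβ)
    (L.subtype (· ∈ W)) (L'.subtype (· ∈ W))
  simpa only [hsum, Fintype.card_fun, Module.card_eq_pow_finrank (K := F) (V := W), Nat.cast_pow,
    hpow _ Fintype.card_pos, hpow _ Module.finrank_pos, hcard L hL, hcard L' hL'] using hbound

end MvPolynomial

/-- Cross incidence bound for two sets of multivariate polynomials from a subspace `V` with
property (*): `|Σ_{f∈L,f'∈L'} N_q(f−f') − q^(m−1)|L||L'|| ≤ q^(dim V −1)·√(|L||L'|)`. -/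
theorem stmt12 {m : ℕ} {F : Type} [Field F] [Fintype F] [DecidableEq F] (hm : 0 < m)
    (V : Submodule F (MvPolynomial (Fin m) F)) (I : Finset (Fin m →₀ ℕ))
    (hV : V = Submodule.span F ((fun d => MvPolynomial.monomial d (1 : F)) '' I))
    (h0 : (0 : Fin m →₀ ℕ) ∈ I)
    (hpure : ∀ j : Fin m, ∃ k : ℕ, 0 < k ∧ Nat.gcd k (Fintype.card F - 1) = 1 ∧
      Finsupp.single j k ∈ I)
    (L L' : Finset (MvPolynomial (Fin m) F))
    (hL : ∀ f ∈ L, f ∈ V) (hL' : ∀ f ∈ L', f ∈ V) :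
    |(∑ f ∈ L, ∑ f' ∈ L',
        ((Finset.univ.filter fun a : Fin m → F =>
          MvPolynomial.eval a (f - f') = 0).card : ℝ)) -
        (Fintype.card F : ℝ) ^ (m - 1) * (L.card : ℝ) * (L'.card : ℝ)| ≤
      (Fintype.card F : ℝ) ^ (Module.finrank F V - 1) *
        Real.sqrt ((L.card : ℝ) * (L'.card : ℝ)) := by
  have : Nonempty (Fin m) := ⟨⟨0, hm⟩⟩
  have : FiniteDimensional F V := hV ▸ FiniteDimensional.span_of_finite F (I.finite_toSet.image _)
  have h1 : (1 : MvPolynomial (Fin m) F) ∈ V := by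
    simpa [hV] using MvPolynomial.monomial_one_mem_span (F := F) (Finset.mem_coe.mpr h0)
  have hsep : ∀ α β : Fin m → F, α ≠ β → ∃ p ∈ V, MvPolynomial.eval α p ≠ MvPolynomial.eval β p :=
    fun α β hαβ => hV ▸ MvPolynomial.exists_mem_span_eval_ne hpure hαβ
  simpa using MvPolynomial.abs_sum_sum_card_zeros_sub_le V h1 hsep L L' hL hL'
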